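/- arXiv:1310.1327 — 2 statements merged into one kernel-verified Lean document; each statement's English description precedes it below -/
import Mathlib

section
/- For positive integers a, b, n with n ≥ 3 and a + b ≤ n, the number of ordered pairs (I, J) where I is an arc of length a on the cycle C_n, J is an arc of length b on C_n, and I and J are disjoint, equals n(n - a - b + 1). -/
/-- The placements of a single piece of weight `w` on the cycle `C_n` with
vertices `0, ..., n-1`. -/
def cyclePlacements (n w : ℕ) : Finset (Finset ℕ) :=
  (Finset.range n).powerset.filter
    (fun S => ∃ i ∈ Finset.range n,
      S = (Finset.range w).image (fun j => (i + j) % n))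

/-- The arc of length `w` starting at `i` on `C_n`. -/
def arcSet (n w i : ℕ) : Finset ℕ := (Finset.range w).image (fun j => (i + j) % n)

lemma arcSet_lt {n w i m : ℕ} (hn : 0 < n) (h : m ∈ arcSet n w i) : m < n := by
  simp only [arcSet, Finset.mem_image, Finset.mem_range] at h
  obtain ⟨j, _, rfl⟩ := h
  exact Nat.mod_lt _ hn

lemma mem_arcSet {n w i m : ℕ} (hn : 0 < n) (hi : i < n) (hw : w ≤ n) (hm : m < n) :
    m ∈ arcSet n w i ↔ ((i ≤ m ∧ m < i + w) ∨ m + n < i + w) := by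
  simp only [arcSet, Finset.mem_image, Finset.mem_range]
  constructor
  · rintro ⟨j, hj, rfl⟩
    rcases Nat.lt_or_ge (i + j) n with h | h
    · rw [Nat.mod_eq_of_lt h]; omega
    · rw [Nat.mod_eq_sub_mod h, Nat.mod_eq_of_lt (by omega)]; omega
  · rintro (⟨h1, h2⟩ | h)
    · exact ⟨m - i, by omega, by rw [Nat.add_sub_cancel' h1, Nat.mod_eq_of_lt hm]⟩
    · refine ⟨m + n - i, by omega, ?_⟩
      have hv : i + (m + n - i) = m + n := by omega
      rw [hv, Nat.add_mod_right, Nat.mod_eq_of_lt hm]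

lemma mem_cyclePlacements {n w : ℕ} {S : Finset ℕ} (hn : 0 < n) :
    S ∈ cyclePlacements n w ↔ ∃ i < n, S = arcSet n w i := by
  simp only [cyclePlacements, Finset.mem_filter, Finset.mem_powerset, Finset.mem_range]
  constructor
  · rintro ⟨-, i, hi, rfl⟩; exact ⟨i, hi, rfl⟩
  · rintro ⟨i, hi, rfl⟩
    refine ⟨?_, i, hi, rfl⟩
    intro m hm
    exact Finset.mem_range.mpr (arcSet_lt hn hm)

lemma arcSet_inj {n w i i' : ℕ} (hw1 : 1 ≤ w) (hwn : w < n) (hi : i < n) (hi' : i' < n)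
    (h : arcSet n w i = arcSet n w i') : i = i' := by
  have hn : 0 < n := by omega
  by_contra hne
  have hii' : i ∈ arcSet n w i' := by
    rw [← h]
    exact (mem_arcSet hn hi (le_of_lt hwn) hi).mpr (by omega)
  have hi'i : i' ∈ arcSet n w i := by
    rw [h]
    exact (mem_arcSet hn hi' (le_of_lt hwn) hi').mpr (by omega)
  rw [mem_arcSet hn hi' (le_of_lt hwn) hi] at hii'
  rw [mem_arcSet hn hi (le_of_lt hwn) hi'] at hi'i
  -- the point just after arc i
  set m3 := (i + w) % n with hm3
  have hm3n : m3 < n := Nat.mod_lt _ hn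
  have hm3v : m3 = i + w ∨ (m3 = i + w - n ∧ n ≤ i + w) := by
    rcases Nat.lt_or_ge (i + w) n with hc | hc
    · left; rw [hm3, Nat.mod_eq_of_lt hc]
    · right; exact ⟨by rw [hm3, Nat.mod_eq_sub_mod hc, Nat.mod_eq_of_lt (by omega)], hc⟩
  have h3 : m3 ∉ arcSet n w i := by
    rw [mem_arcSet hn hi (le_of_lt hwn) hm3n]; omega
  rw [h] at h3
  rw [mem_arcSet hn hi' (le_of_lt hwn) hm3n] at h3
  set m4 := (i' + w) % n with hm4
  have hm4n : m4 < n := Nat.mod_lt _ hn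
  have hm4v : m4 = i' + w ∨ (m4 = i' + w - n ∧ n ≤ i' + w) := by
    rcases Nat.lt_or_ge (i' + w) n with hc | hc
    · left; rw [hm4, Nat.mod_eq_of_lt hc]
    · right; exact ⟨by rw [hm4, Nat.mod_eq_sub_mod hc, Nat.mod_eq_of_lt (by omega)], hc⟩
  have h4 : m4 ∉ arcSet n w i' := by
    rw [mem_arcSet hn hi' (le_of_lt hwn) hm4n]; omega
  rw [← h] at h4
  rw [mem_arcSet hn hi (le_of_lt hwn) hm4n] at h4
  omega

/-- For `n ≥ 3` and `a + b ≤ n`, the number of ordered pairs `(I, J)` of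
disjoint arcs of lengths `a` and `b` on the cycle `C_n` equals
`n(n - a - b + 1)`. -/
theorem cycle_two_mixed_pieces_count (n a b : ℕ) (hn : 3 ≤ n) (ha : 1 ≤ a)
    (hb : 1 ≤ b) (hab : a + b ≤ n) :
    (((cyclePlacements n a) ×ˢ (cyclePlacements n b)).filter
        (fun p => Disjoint p.1 p.2)).card = n * (n - a - b + 1) := by
  have hn0 : 0 < n := by omega
  have han : a < n := by omega
  have hbn : b < n := by omega
  have key := Finset.card_bij
    (s := (Finset.range n) ×ˢ (Finset.range (n - a - b + 1)))
    (t := ((cyclePlacements n a) ×ˢ (cyclePlacements n b)).filter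
        (fun p => Disjoint p.1 p.2))
    (fun p _ => (arcSet n a p.1, arcSet n b ((p.1 + a + p.2) % n))) ?_ ?_ ?_
  · rw [← key, Finset.card_product, Finset.card_range, Finset.card_range]
  · -- maps into the target
    rintro ⟨i, k⟩ hp
    simp only [Finset.mem_product, Finset.mem_range] at hp
    obtain ⟨hi, hk⟩ := hp
    set j := (i + a + k) % n with hj
    have hjn : j < n := Nat.mod_lt _ hn0
    have hjv : j = i + a + k ∨ (j = i + a + k - n ∧ n ≤ i + a + k) := by
      rcases Nat.lt_or_ge (i + a + k) n with hc | hc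
      · left; rw [hj, Nat.mod_eq_of_lt hc]
      · right; exact ⟨by rw [hj, Nat.mod_eq_sub_mod hc, Nat.mod_eq_of_lt (by omega)], hc⟩
    simp only [Finset.mem_filter, Finset.mem_product]
    refine ⟨⟨(mem_cyclePlacements hn0).mpr ⟨i, hi, rfl⟩,
      (mem_cyclePlacements hn0).mpr ⟨j, hjn, rfl⟩⟩, ?_⟩
    rw [Finset.disjoint_left]
    intro m hmI hmJ
    have hm : m < n := arcSet_lt hn0 hmI
    rw [mem_arcSet hn0 hi (le_of_lt han) hm] at hmI
    rw [mem_arcSet hn0 hjn (le_of_lt hbn) hm] at hmJ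
    omega
  · -- injective
    rintro ⟨i, k⟩ h1 ⟨i', k'⟩ h2 heq
    simp only [Finset.mem_product, Finset.mem_range] at h1 h2
    obtain ⟨hi, hk⟩ := h1
    obtain ⟨hi', hk'⟩ := h2
    simp only [Prod.mk.injEq] at heq
    obtain ⟨heqa, heqb⟩ := heq
    have hii : i = i' := arcSet_inj ha han hi hi' heqa
    subst hii
    have hjj := arcSet_inj hb hbn (Nat.mod_lt _ hn0) (Nat.mod_lt _ hn0) heqb
    have hkk : k = k' := by
      have e1 : (i + a + k) % n = i + a + k ∨
          ((i + a + k) % n = i + a + k - n ∧ n ≤ i + a + k) := by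
        rcases Nat.lt_or_ge (i + a + k) n with hc | hc
        · left; rw [Nat.mod_eq_of_lt hc]
        · right; exact ⟨by rw [Nat.mod_eq_sub_mod hc, Nat.mod_eq_of_lt (by omega)], hc⟩
      have e2 : (i + a + k') % n = i + a + k' ∨
          ((i + a + k') % n = i + a + k' - n ∧ n ≤ i + a + k') := by
        rcases Nat.lt_or_ge (i + a + k') n with hc | hc
        · left; rw [Nat.mod_eq_of_lt hc]
        · right; exact ⟨by rw [Nat.mod_eq_sub_mod hc, Nat.mod_eq_of_lt (by omega)], hc⟩
      omega
    rw [hkk]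
  · -- surjective
    rintro ⟨S, T⟩ hST
    simp only [Finset.mem_filter, Finset.mem_product] at hST
    obtain ⟨⟨hS, hT⟩, hdisj⟩ := hST
    obtain ⟨i, hi, rfl⟩ := (mem_cyclePlacements hn0).mp hS
    obtain ⟨j, hj, rfl⟩ := (mem_cyclePlacements hn0).mp hT
    have hiS : i ∈ arcSet n a i :=
      (mem_arcSet hn0 hi (le_of_lt han) hi).mpr (by omega)
    have hjT : j ∈ arcSet n b j :=
      (mem_arcSet hn0 hj (le_of_lt hbn) hj).mpr (by omega)
    have hiT : i ∉ arcSet n b j := Finset.disjoint_left.mp hdisj hiS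
    have hjS : j ∉ arcSet n a i := Finset.disjoint_right.mp hdisj hjT
    rw [mem_arcSet hn0 hj (le_of_lt hbn) hi] at hiT
    rw [mem_arcSet hn0 hi (le_of_lt han) hj] at hjS
    obtain ⟨k, hkv⟩ : ∃ k, i + a + k = j ∨ (i + a + k = j + n ∧ j < i + a) := by
      rcases le_or_gt (i + a) j with h | h
      · exact ⟨j - i - a, Or.inl (by omega)⟩
      · exact ⟨j + n - i - a, Or.inr ⟨by omega, h⟩⟩
    have hkb : k ≤ n - a - b := by omega
    have hjk : (i + a + k) % n = j := by
      rcases hkv with h | ⟨h, -⟩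
      · rw [h, Nat.mod_eq_of_lt hj]
      · rw [h, Nat.add_mod_right, Nat.mod_eq_of_lt hj]
    refine ⟨(i, k), ?_, ?_⟩
    · simp only [Finset.mem_product, Finset.mem_range]
      exact ⟨hi, by omega⟩
    · show (arcSet n a i, arcSet n b ((i + a + k) % n)) = _
      rw [hjk]
end

section
/- For positive integers a ≤ b, k, n with kb ≤ n, the number f_k of k-piece positions of the weight game [a,b] on K_n satisfies (n! / ((n - ka)! · k! · (b!)^k)) · 2^k ≤ f_k ≤ (n! / ((n - kb)! · k! · (a!)^k)) · 2^k, where f_k = Σ_{l=0}^{k} (n! / ((k-l)! · l! · (a!)^{k-l} · (b!)^l · (n - (k-l)a - lb)!)). -/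
open Nat Finset

private lemma fk_div_mul_le (N E c : ℕ) : N / (E * c) * c ≤ N / E := by
  rw [← Nat.div_div_eq_div_mul]
  exact Nat.div_mul_le_self _ _

/-- For `a ≤ b` and `kb ≤ n`, the number
`f_k = Σ_{l=0}^{k} n! / ((k-l)!·l!·(a!)^{k-l}·(b!)^l·(n-(k-l)a-lb)!)` of
`k`-piece positions of the weight game `[a,b]` on `K_n` satisfies
`(n!/((n-ka)!·k!·(b!)^k))·2^k ≤ f_k ≤ (n!/((n-kb)!·k!·(a!)^k))·2^k`. -/
theorem completeGraph_fk_bounds (a b k n : ℕ) (ha : 0 < a) (hb : 0 < b)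
    (hk : 0 < k) (hab : a ≤ b) (hkbn : k * b ≤ n) :
    Nat.factorial n /
          (Nat.factorial (n - k * a) * Nat.factorial k * Nat.factorial b ^ k) *
        2 ^ k ≤
      (∑ l ∈ Finset.range (k + 1),
        Nat.factorial n /
          (Nat.factorial (k - l) * Nat.factorial l *
            Nat.factorial a ^ (k - l) * Nat.factorial b ^ l *
            Nat.factorial (n - (k - l) * a - l * b))) ∧
    (∑ l ∈ Finset.range (k + 1),
        Nat.factorial n /
          (Nat.factorial (k - l) * Nat.factorial l *
            Nat.factorial a ^ (k - l) * Nat.factorial b ^ l *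
            Nat.factorial (n - (k - l) * a - l * b))) ≤
      Nat.factorial n /
          (Nat.factorial (n - k * b) * Nat.factorial k * Nat.factorial a ^ k) *
        2 ^ k := by
  have hkan : k * a ≤ n := le_trans (Nat.mul_le_mul_left k hab) hkbn
  constructor
  · -- lower bound
    rw [← Nat.sum_range_choose, Finset.mul_sum]
    apply Finset.sum_le_sum
    intro l hl
    have hlk : l ≤ k := Nat.lt_succ_iff.mp (Finset.mem_range.mp hl)
    have hkl := Nat.choose_mul_factorial_mul_factorial hlk
    set D := (k - l)! * l ! * a ! ^ (k - l) * b ! ^ l * (n - (k - l) * a - l * b)! with hD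
    set E := (k - l)! * l ! * b ! ^ (k - l) * b ! ^ l * (n - k * a)! with hE
    have hpow : b ! ^ k = b ! ^ (k - l) * b ! ^ l := by
      rw [← pow_add, Nat.sub_add_cancel hlk]
    have hEC : (n - k * a)! * k ! * b ! ^ k = E * Nat.choose k l := by
      rw [hE, ← hkl, hpow]; ring
    have hsub : n - (k - l) * a - l * b ≤ n - k * a := by
      rw [Nat.sub_sub]
      apply Nat.sub_le_sub_left
      calc k * a = (k - l) * a + l * a := by
              rw [← Nat.add_mul, Nat.sub_add_cancel hlk]
          _ ≤ (k - l) * a + l * b :=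
              Nat.add_le_add_left (Nat.mul_le_mul_left l hab) _
    have hDE : D ≤ E := by
      apply Nat.mul_le_mul
      apply Nat.mul_le_mul
      apply Nat.mul_le_mul le_rfl
      · exact Nat.pow_le_pow_left (Nat.factorial_le hab) _
      · exact le_rfl
      · exact Nat.factorial_le hsub
    have hDpos : 0 < D := by
      positivity
    calc n ! / ((n - k * a)! * k ! * b ! ^ k) * Nat.choose k l
        = n ! / (E * Nat.choose k l) * Nat.choose k l := by rw [hEC]
      _ ≤ n ! / E := fk_div_mul_le _ _ _
      _ ≤ n ! / D := Nat.div_le_div_left hDE hDpos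
  · -- upper bound
    -- divisibility: (n-kb)! * k! * a!^k ∣ n!
    have h1 : k ! * a ! ^ k ∣ (k * a)! := by
      refine Dvd.intro (Nat.uniformBell k a) ?_
      rw [← Nat.uniformBell_mul_eq k ha.ne' ]; ring
    have h2 : (k * a)! * (n - k * a)! ∣ n ! :=
      Nat.factorial_mul_factorial_dvd_factorial hkan
    have h3 : (n - k * b)! ∣ (n - k * a)! :=
      Nat.factorial_dvd_factorial (Nat.sub_le_sub_left (Nat.mul_le_mul_left k hab) n)
    have hdvd : (n - k * b)! * k ! * a ! ^ k ∣ n ! := by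
      calc (n - k * b)! * k ! * a ! ^ k
          = (k ! * a ! ^ k) * (n - k * b)! := by ring
        _ ∣ (k * a)! * (n - k * a)! := mul_dvd_mul h1 h3
        _ ∣ n ! := h2
    obtain ⟨q, hq⟩ := hdvd
    have hFpos : 0 < (n - k * b)! * k ! * a ! ^ k := by positivity
    have hB : n ! / ((n - k * b)! * k ! * a ! ^ k) = q := by
      rw [hq, Nat.mul_div_cancel_left _ hFpos]
    rw [hB, ← Nat.sum_range_choose, Finset.mul_sum]
    apply Finset.sum_le_sum
    intro l hl
    have hlk : l ≤ k := Nat.lt_succ_iff.mp (Finset.mem_range.mp hl)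
    have hkl := Nat.choose_mul_factorial_mul_factorial hlk
    set D := (k - l)! * l ! * a ! ^ (k - l) * b ! ^ l * (n - (k - l) * a - l * b)! with hD
    set F := (k - l)! * l ! * a ! ^ (k - l) * a ! ^ l * (n - k * b)! with hF
    have hpow : a ! ^ k = a ! ^ (k - l) * a ! ^ l := by
      rw [← pow_add, Nat.sub_add_cancel hlk]
    have hFC : (n - k * b)! * k ! * a ! ^ k = F * Nat.choose k l := by
      rw [hF, ← hkl, hpow]; ring
    have hsub : n - k * b ≤ n - (k - l) * a - l * b := by
      rw [Nat.sub_sub]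
      apply Nat.sub_le_sub_left
      calc (k - l) * a + l * b ≤ (k - l) * b + l * b :=
            Nat.add_le_add_right (Nat.mul_le_mul_left _ hab) _
        _ = k * b := by rw [← Nat.add_mul, Nat.sub_add_cancel hlk]
    have hFD : F ≤ D := by
      apply Nat.mul_le_mul
      apply Nat.mul_le_mul
      apply Nat.mul_le_mul le_rfl
      · exact le_rfl
      · exact Nat.pow_le_pow_left (Nat.factorial_le hab) _
      · exact Nat.factorial_le hsub
    have hFpos' : 0 < F := by rw [hF]; positivity
    have hqF : n ! / F = Nat.choose k l * q := by
      rw [hq, hFC, mul_assoc, Nat.mul_div_cancel_left _ hFpos']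
    calc n ! / D ≤ n ! / F := Nat.div_le_div_left hFD hFpos'
      _ = q * Nat.choose k l := by rw [hqF]; ring
end
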